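/- Let k ≥ 2 be an integer and define p_n(z) by p_0 = 1, p_1 = z, p_2 = z² − 2k, p_{n+1}(z) = z·p_n(z) − (2k−1)·p_{n−1}(z) for n ≥ 2. Then the derivatives satisfy p_{n+1}'(2k) > p_n'(2k) for all n ≥ 1. -/

import Mathlib

/-- The polynomials `p_n` over `ℝ`: `p_0 = 1`, `p_1 = z`, `p_2 = z² - 2k`,
`p_{n+1} = z p_n - (2k-1) p_{n-1}` for `n ≥ 2`. -/
noncomputable def pR (k : ℕ) : ℕ → Polynomial ℝ
  | 0 => 1
  | 1 => Polynomial.X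
  | 2 => Polynomial.X ^ 2 - Polynomial.C ((2 * k : ℕ) : ℝ)
  | (n + 3) => Polynomial.X * pR k (n + 2) - Polynomial.C ((2 * k - 1 : ℕ) : ℝ) * pR k (n + 1)

/-!
Write `K = 2k` and `M = 2k - 1 = K - 1`. Evaluating the recursion at `K` gives `p_{n+1}(K) = K Mⁿ`,
and differentiating it gives `p_{n+2}' = p_{n+1} + z p_{n+1}' - M p_n'` for every `n ≥ 0`
(at `n = 0` this holds because `p_2' = 2z`, although `p_2` itself breaks the pattern).
At `z = K`, the differences `δ_n = p_{n+1}'(K) - p_n'(K)` therefore satisfy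
`δ_{n+1} = K Mⁿ + M δ_n`, and `δ_0 = 1 > 0`, so all of them are positive.
-/

open Polynomial

theorem strictMono_of_sub_succ_eq {d e : ℕ → ℝ} {c : ℝ} (hc : 0 ≤ c) (he : ∀ n, 0 < e n)
    (h01 : d 0 < d 1) (hd : ∀ n, d (n + 2) - d (n + 1) = e n + c * (d (n + 1) - d n)) :
    StrictMono d := by
  refine strictMono_nat_of_lt_succ fun n => sub_pos.mp ?_
  induction n with
  | zero => exact sub_pos.mpr h01
  | succ n ih =>
    rw [hd]
    exact add_pos_of_pos_of_nonneg (he n) (mul_nonneg hc ih.le)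

theorem cast_two_mul_sub_one {k : ℕ} (hk : 1 ≤ k) :
    ((2 * k - 1 : ℕ) : ℝ) = ((2 * k : ℕ) : ℝ) - 1 := by
  rw [Nat.cast_sub (by omega), Nat.cast_one]

theorem eval_pR_succ {k : ℕ} (hk : 1 ≤ k) :
    ∀ n, (pR k (n + 1)).eval ((2 * k : ℕ) : ℝ) = ((2 * k : ℕ) : ℝ) * ((2 * k - 1 : ℕ) : ℝ) ^ n
  | 0 => by simp [pR]
  | 1 => by
    simp only [pR, eval_sub, eval_pow, eval_X, eval_C, cast_two_mul_sub_one hk]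
    ring
  | n + 2 => by
    simp only [pR, eval_sub, eval_mul, eval_X, eval_C, eval_pR_succ hk n,
      eval_pR_succ hk (n + 1), cast_two_mul_sub_one hk]
    ring

theorem derivative_pR_add_two (k n : ℕ) :
    derivative (pR k (n + 2)) =
      pR k (n + 1) + X * derivative (pR k (n + 1)) - C ((2 * k - 1 : ℕ) : ℝ) * derivative (pR k n) := by
  cases n with
  | zero =>
    simp only [pR, derivative_sub, derivative_X_pow, derivative_C, derivative_X, derivative_one,
      Nat.cast_ofNat, map_ofNat C, mul_zero, mul_one, sub_zero]
    ring
  | succ n => simp [pR, derivative_mul]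

theorem stmt8_general (k : ℕ) (hk : 2 ≤ k) (n : ℕ) :
    (Polynomial.derivative (pR k n)).eval ((2 * k : ℕ) : ℝ) <
      (Polynomial.derivative (pR k (n + 1))).eval ((2 * k : ℕ) : ℝ) := by
  have hk₁ : 1 ≤ k := by omega
  refine strictMono_of_sub_succ_eq (d := fun n => (derivative (pR k n)).eval ((2 * k : ℕ) : ℝ))
    (e := fun n => ((2 * k : ℕ) : ℝ) * ((2 * k - 1 : ℕ) : ℝ) ^ n) (c := ((2 * k - 1 : ℕ) : ℝ))
    (Nat.cast_nonneg _) (fun n => ?_) (by simp [pR]) (fun n => ?_) n.lt_succ_self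
  · have : (0 : ℝ) < ((2 * k - 1 : ℕ) : ℝ) := Nat.cast_pos.mpr (by omega)
    positivity
  · rw [derivative_pR_add_two, eval_sub, eval_add, eval_mul, eval_mul, eval_X, eval_C,
      eval_pR_succ hk₁, cast_two_mul_sub_one hk₁]
    ring

/-- The derivatives satisfy `p_{n+1}'(2k) > p_n'(2k)` for all `n ≥ 1`. -/
theorem stmt8 (k : ℕ) (hk : 2 ≤ k) (n : ℕ) (hn : 1 ≤ n) :
    (Polynomial.derivative (pR k n)).eval ((2 * k : ℕ) : ℝ) <
      (Polynomial.derivative (pR k (n + 1))).eval ((2 * k : ℕ) : ℝ) :=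
  stmt8_general k hk n
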